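/- (Main Theorem.) Let 𝒜 be a finite nonempty set, let V = ℤ^d, and let μ be a translation invariant probability measure on 𝒜^V. Let (A, G) be a tiling of V, and partition A into N nonempty sets A_1, …, A_N (1 ≤ N ≤ |A|); set A_{<k} = ∪_{i=1}^{k−1} A_i. Then the entropy density s_μ = lim_{n→∞} S(V_n)/|V_n| (with V_n = {v ∈ ℤ^d : |v_i| ≤ n for all i}) exists and equals s_μ = (1/|A|) Σ_{k=1}^N S( A_k | (A_k + G^−) ∪ (A_{<k} + G) ), where each conditional entropy with infinite conditioning set Λ' is defined as lim_{n→∞} S(A_k | Λ' ∩ V_n). -/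

import Mathlib

open MeasureTheory Real Filter Pointwise

/-- The lattice `ℤ^d`. -/
abbrev LatZ (d : ℕ) := Fin d → ℤ

/-- Probability of the cylinder set determined by the configuration `x` on the finite set `Λ`. -/
noncomputable def cylProb {d : ℕ} {𝒜 : Type*} [MeasurableSpace 𝒜]
    (μ : Measure (LatZ d → 𝒜)) (Λ : Finset (LatZ d)) (x : Λ → 𝒜) : ℝ :=
  (μ {ω | ∀ v : Λ, ω v.1 = x v}).toReal

/-- The entropy `S(Λ)` of a finite set of sites `Λ` with respect to `μ`. -/
noncomputable def entS {d : ℕ} {𝒜 : Type*} [Fintype 𝒜] [MeasurableSpace 𝒜]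
    (μ : Measure (LatZ d → 𝒜)) (Λ : Finset (LatZ d)) : ℝ :=
  -∑ x : (Λ → 𝒜), cylProb μ Λ x * Real.log (cylProb μ Λ x)

/-- The conditional entropy `S(Λ | Λ')` (terms with zero probability vanish since
`Real.log 0 = 0` and `0 * log 0 = 0`). -/
noncomputable def condEnt {d : ℕ} {𝒜 : Type*} [Fintype 𝒜] [MeasurableSpace 𝒜]
    (μ : Measure (LatZ d → 𝒜)) (Λ Λ' : Finset (LatZ d)) : ℝ :=
  -∑ x : ((Λ ∪ Λ' : Finset (LatZ d)) → 𝒜),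
      cylProb μ (Λ ∪ Λ') x *
        Real.log (cylProb μ (Λ ∪ Λ') x /
          cylProb μ Λ' (fun v => x ⟨v.1, Finset.mem_union_right Λ v.2⟩))

/-- The shift map `σ_v`, `(σ_v x)(u) = x(u + v)`. -/
def shiftMap {d : ℕ} {𝒜 : Type*} (v : LatZ d) (ω : LatZ d → 𝒜) : LatZ d → 𝒜 :=
  fun u => ω (u + v)

/-- `μ` is translation invariant if it is preserved by every shift `σ_v`. -/
def TransInv {d : ℕ} {𝒜 : Type*} [MeasurableSpace 𝒜] (μ : Measure (LatZ d → 𝒜)) : Prop :=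
  ∀ v : LatZ d, μ.map (shiftMap v) = μ

/-- The box `V_n = {v ∈ ℤ^d : |v_i| ≤ n ∀ i}` (also used as coordinate box `G_n`). -/
noncomputable def Vbox (d n : ℕ) : Finset (LatZ d) :=
  Fintype.piFinset fun _ => Finset.Icc (-(n : ℤ)) (n : ℤ)

open Classical in
/-- The finite set `Λ' ∩ V_n` for a (possibly infinite) `Λ' ⊆ ℤ^d`. -/
noncomputable def interBox (d : ℕ) (Λ' : Set (LatZ d)) (n : ℕ) : Finset (LatZ d) :=
  (Vbox d n).filter (· ∈ Λ')

/-- The lattice point `Σ_i c_i ê_i` with coordinates `c` in the basis `e`. -/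
def latt {d : ℕ} (e : Fin d → LatZ d) (c : Fin d → ℤ) : LatZ d :=
  ∑ i, c i • e i

/-- Lexicographic comparison of coordinate vectors. -/
def lexLt {d : ℕ} (c c' : Fin d → ℤ) : Prop :=
  ∃ i, c i < c' i ∧ ∀ j, j < i → c j = c' j

/-- The subgroup `G` generated by `e`, as a set. -/
def Gfull {d : ℕ} (e : Fin d → LatZ d) : Set (LatZ d) :=
  Set.range (latt e)

/-- `G^- = {g ∈ G : g < 0}` in the lexicographic order on `G`. -/
def Gneg {d : ℕ} (e : Fin d → LatZ d) : Set (LatZ d) :=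
  {g | ∃ c, lexLt c 0 ∧ g = latt e c}

/-- The finite subset `G_n = {Σ g_i ê_i : |g_i| ≤ n}` of `G`. -/
noncomputable def GboxF {d : ℕ} (e : Fin d → LatZ d) (n : ℕ) : Finset (LatZ d) :=
  (Vbox d n).image (latt e)

/-- A tiling `(A, G)` of `ℤ^d`, with `G` the subgroup generated by the
`ℤ`-linearly independent family `e`. -/
structure IsTiling {d : ℕ} (A : Finset (LatZ d)) (e : Fin d → LatZ d) : Prop where
  zero_mem : (0 : LatZ d) ∈ A
  indep : LinearIndependent ℤ e
  cover : ∀ v : LatZ d, ∃ a ∈ A, ∃ c : Fin d → ℤ, v = a + latt e c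
  disj : ∀ c c' : Fin d → ℤ, latt e c ≠ latt e c' →
    Disjoint (A.image (· + latt e c)) (A.image (· + latt e c'))

/-- The unit cube `U_d`. -/
noncomputable def Ud (d : ℕ) : Finset (LatZ d) :=
  Fintype.piFinset fun _ => Finset.Icc (-1 : ℤ) 1

open Classical in
/-- The boundary `∂Λ = Λ ∩ (U_d + Λ^C)`. -/
noncomputable def bdry {d : ℕ} (Λ : Finset (LatZ d)) : Finset (LatZ d) :=
  Λ.filter (fun v => v ∈ (↑(Ud d) : Set (LatZ d)) + (↑Λ : Set (LatZ d))ᶜ)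


/-!
Order the pieces `A_k + g` (`g ∈ G`) lexicographically by `(k, g)`. By the chain rule,
`S(V_n)` is the sum, over the pieces meeting `V_n`, of the entropy of the piece inside `V_n`
conditioned on all earlier pieces inside `V_n`; for the piece `A_k + g` the earlier pieces fill out
exactly `V_n ∩ (Λ_k + g)`, where `Λ_k = (A_k + G⁻) ∪ (A_{<k} + G)`. If `A_k + g` and `V_r + g`
lie inside `V_n`, translation invariance and the monotonicity of conditional entropy in the
conditioning set (strong subadditivity, a consequence of Gibbs' inequality) squeeze this term
between `S(A_k | Λ_k)` and `S(A_k | Λ_k ∩ V_r)`. The remaining pieces cover a vanishing fraction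
of `V_n` and cost at most `log |𝒜|` per site; letting `n → ∞` and then `r → ∞` gives the formula.
-/

open Finset Topology

noncomputable def shannonEntropy {γ : Type*} [Fintype γ] (P : γ → ℝ) : ℝ :=
  -∑ x, P x * Real.log (P x)

section FiniteDistribution

variable {γ α : Type*} [Fintype γ] [DecidableEq α]

noncomputable def finMarginal (f : γ → α) (P : γ → ℝ) (s : α) : ℝ :=
  ∑ x with f x = s, P x

lemma finMarginal_nonneg {f : γ → α} {P : γ → ℝ} (hP : ∀ x, 0 ≤ P x) (s : α) :
    0 ≤ finMarginal f P s :=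
  sum_nonneg fun x _ => hP x

lemma le_finMarginal {f : γ → α} {P : γ → ℝ} (hP : ∀ x, 0 ≤ P x) (x : γ) :
    P x ≤ finMarginal f P (f x) :=
  single_le_sum (f := P) (fun y _ => hP y) (by simp)

lemma sum_finMarginal [Fintype α] (f : γ → α) (P : γ → ℝ) : ∑ s, finMarginal f P s = ∑ x, P x :=
  sum_fiberwise univ f P

lemma sum_mul_comp_eq_sum_finMarginal [Fintype α] (f : γ → α) (P : γ → ℝ) (F : α → ℝ) :
    ∑ x, P x * F (f x) = ∑ s, finMarginal f P s * F s := by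
  simp_rw [finMarginal, sum_mul, ← sum_fiberwise univ f (fun x => P x * F (f x))]
  exact sum_congr rfl fun s _ => sum_congr rfl fun x hx => by rw [(mem_filter.1 hx).2]

lemma finMarginal_finMarginal [Fintype α] {χ : Type*} [DecidableEq χ] (f : γ → α) (g : α → χ)
    (P : γ → ℝ) : finMarginal g (finMarginal f P) = finMarginal (g ∘ f) P := by
  funext t
  simp only [finMarginal]
  rw [sum_fiberwise_eq_sum_filter]
  simp

/-- Gibbs' inequality, for a subnormalised `R`. -/
theorem sum_mul_log_le_sum_mul_log {P R : γ → ℝ} (hP : ∀ x, 0 ≤ P x) (hR : ∀ x, 0 ≤ R x)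
    (hRP : ∀ x, R x = 0 → P x = 0) (hsum : ∑ x, R x ≤ ∑ x, P x) :
    ∑ x, P x * Real.log (R x) ≤ ∑ x, P x * Real.log (P x) := by
  have hterm : ∀ x, P x * Real.log (R x) - P x * Real.log (P x) ≤ R x - P x := by
    intro x
    rcases (hP x).eq_or_lt with h0 | hpos
    · simp [← h0, hR x]
    have hRpos : 0 < R x := (hR x).lt_of_ne fun h => hpos.ne' (hRP x h.symm)
    calc P x * Real.log (R x) - P x * Real.log (P x) = P x * Real.log (R x / P x) := by
          rw [Real.log_div hRpos.ne' hpos.ne']; ring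
      _ ≤ P x * (R x / P x - 1) :=
          mul_le_mul_of_nonneg_left (Real.log_le_sub_one_of_pos (div_pos hRpos hpos)) hpos.le
      _ = R x - P x := by field_simp
  have := sum_le_sum fun x (_ : x ∈ univ) => hterm x
  rw [sum_sub_distrib, sum_sub_distrib] at this
  linarith

lemma neg_sum_mul_log_div_finMarginal [Fintype α] (f : γ → α) {P : γ → ℝ} (hP : ∀ x, 0 ≤ P x) :
    -∑ x, P x * Real.log (P x / finMarginal f P (f x)) =
      shannonEntropy P - shannonEntropy (finMarginal f P) := by
  have hlog : ∀ x, P x * Real.log (P x / finMarginal f P (f x)) =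
      P x * Real.log (P x) - P x * Real.log (finMarginal f P (f x)) := by
    intro x
    rcases (hP x).eq_or_lt with h0 | hpos
    · simp [← h0]
    rw [Real.log_div hpos.ne' (hpos.trans_le (le_finMarginal hP x)).ne']
    ring
  simp_rw [shannonEntropy, hlog, sum_sub_distrib,
    sum_mul_comp_eq_sum_finMarginal f P (fun s => Real.log (finMarginal f P s))]
  ring

lemma shannonEntropy_finMarginal_le [Fintype α] (f : γ → α) {P : γ → ℝ} (hP : ∀ x, 0 ≤ P x) :
    shannonEntropy (finMarginal f P) ≤ shannonEntropy P := by
  have hterm : ∀ x, P x * Real.log (P x / finMarginal f P (f x)) ≤ 0 := by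
    intro x
    rcases (hP x).eq_or_lt with h0 | hpos
    · simp [← h0]
    have hm := le_finMarginal (f := f) hP x
    exact mul_nonpos_of_nonneg_of_nonpos hpos.le
      (Real.log_nonpos (div_nonneg hpos.le (hpos.trans_le hm).le)
        (div_le_one_of_le₀ hm (hpos.trans_le hm).le))
  have := neg_sum_mul_log_div_finMarginal f hP
  linarith [sum_nonpos fun x (_ : x ∈ univ) => hterm x]

lemma shannonEntropy_nonneg {P : γ → ℝ} (hP : ∀ x, 0 ≤ P x) (hP1 : ∀ x, P x ≤ 1) :
    0 ≤ shannonEntropy P :=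
  neg_nonneg.2 (sum_nonpos fun x _ => Real.mul_log_nonpos (hP x) (hP1 x))

lemma shannonEntropy_le_log_card {P : γ → ℝ} (hP : ∀ x, 0 ≤ P x) (hsum : ∑ x, P x = 1) :
    shannonEntropy P ≤ Real.log (Fintype.card γ) := by
  have hcard : (0 : ℝ) < Fintype.card γ := by
    have : Nonempty γ := by
      by_contra h
      simp [not_nonempty_iff.1 h] at hsum
    exact_mod_cast Fintype.card_pos
  have hgibbs := sum_mul_log_le_sum_mul_log (R := fun _ => (Fintype.card γ : ℝ)⁻¹) hP
    (fun _ => by positivity) (fun _ h => absurd h (by positivity))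
    (by simp [hsum, hcard.ne'])
  simp only [Real.log_inv, ← sum_mul, hsum] at hgibbs
  rw [shannonEntropy]
  linarith

lemma sum_mul_div_finMarginal_le [Fintype α] {β χ : Type*} [Fintype β] [Fintype χ]
    [DecidableEq β] [DecidableEq χ] {P : γ → ℝ} (hP : ∀ x, 0 ≤ P x)
    (a : γ → α) (b : γ → β) (ca : α → χ) (cb : β → χ) (hcomm : ∀ x, ca (a x) = cb (b x))
    (hinj : ∀ x y, a x = a y → b x = b y → x = y) :
    ∑ x, finMarginal a P (a x) * finMarginal b P (b x) / finMarginal (ca ∘ a) P (ca (a x)) ≤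
      ∑ x, P x := by
  set Pa := finMarginal a P
  set Pb := finMarginal b P
  set Pc := finMarginal (ca ∘ a) P
  have hPc : finMarginal cb Pb = Pc := by
    rw [finMarginal_finMarginal]
    exact congrArg (finMarginal · P) (funext fun x => (hcomm x).symm)
  calc ∑ x, Pa (a x) * Pb (b x) / Pc (ca (a x))
      = ∑ p ∈ univ.image fun x => (a x, b x), Pa p.1 * Pb p.2 / Pc (ca p.1) := by
        rw [sum_image fun x _ y _ h => hinj x y (congrArg Prod.fst h) (congrArg Prod.snd h)]
    _ ≤ ∑ p : α × β with ca p.1 = cb p.2, Pa p.1 * Pb p.2 / Pc (ca p.1) := by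
        refine sum_le_sum_of_subset_of_nonneg ?_ fun p _ _ => ?_
        · intro p hp
          obtain ⟨x, -, rfl⟩ := mem_image.1 hp
          simp [hcomm x]
        · exact div_nonneg (mul_nonneg (finMarginal_nonneg hP _) (finMarginal_nonneg hP _))
            (finMarginal_nonneg hP _)
    _ = ∑ s, Pa s * (finMarginal cb Pb (ca s) / Pc (ca s)) := by
        rw [sum_filter, Fintype.sum_prod_type]
        refine sum_congr rfl fun s _ => ?_
        rw [finMarginal, sum_div, mul_sum, sum_filter]
        refine sum_congr rfl fun t _ => ?_
        by_cases h : cb t = ca s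
        · simp only [h, if_true]
          ring
        · simp [h, Ne.symm h]
    _ ≤ ∑ s, Pa s := by
        rw [hPc]
        exact sum_le_sum fun s _ =>
          mul_le_of_le_one_right (finMarginal_nonneg hP s) (div_self_le_one _)
    _ = ∑ x, P x := sum_finMarginal a P

/-- Strong subadditivity `H(a, b) + H(c) ≤ H(a) + H(b)` for a common coarsening
`c = ca ∘ a = cb ∘ b`. -/
theorem shannonEntropy_add_shannonEntropy_le [Fintype α] {β χ : Type*} [Fintype β] [Fintype χ]
    [DecidableEq β] [DecidableEq χ] {P : γ → ℝ} (hP : ∀ x, 0 ≤ P x)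
    (a : γ → α) (b : γ → β) (ca : α → χ) (cb : β → χ) (hcomm : ∀ x, ca (a x) = cb (b x))
    (hinj : ∀ x y, a x = a y → b x = b y → x = y) :
    shannonEntropy P + shannonEntropy (finMarginal (ca ∘ a) P) ≤
      shannonEntropy (finMarginal a P) + shannonEntropy (finMarginal b P) := by
  set Pa := finMarginal a P
  set Pb := finMarginal b P
  set Pc := finMarginal (ca ∘ a) P
  have hpos : ∀ x, 0 < P x → 0 < Pa (a x) ∧ 0 < Pb (b x) ∧ 0 < Pc (ca (a x)) := fun x hx =>
    ⟨hx.trans_le (le_finMarginal hP x), hx.trans_le (le_finMarginal hP x),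
      hx.trans_le (le_finMarginal (f := ca ∘ a) hP x)⟩
  have hgibbs := sum_mul_log_le_sum_mul_log hP
    (R := fun x => Pa (a x) * Pb (b x) / Pc (ca (a x)))
    (fun x => div_nonneg (mul_nonneg (finMarginal_nonneg hP _) (finMarginal_nonneg hP _))
      (finMarginal_nonneg hP _))
    (fun x hx => by
      by_contra hne
      obtain ⟨h1, h2, h3⟩ := hpos x ((hP x).lt_of_ne (Ne.symm hne))
      exact (div_pos (mul_pos h1 h2) h3).ne' hx)
    (sum_mul_div_finMarginal_le hP a b ca cb hcomm hinj)
  have hexp : ∀ x, P x * Real.log (Pa (a x) * Pb (b x) / Pc (ca (a x))) =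
      P x * Real.log (Pa (a x)) + P x * Real.log (Pb (b x)) - P x * Real.log (Pc ((ca ∘ a) x)) := by
    intro x
    rcases (hP x).eq_or_lt with h0 | hx
    · simp [← h0]
    obtain ⟨h1, h2, h3⟩ := hpos x hx
    rw [Real.log_div (mul_pos h1 h2).ne' h3.ne', Real.log_mul h1.ne' h2.ne', Function.comp_apply]
    ring
  simp only [hexp, sum_sub_distrib, sum_add_distrib] at hgibbs
  rw [sum_mul_comp_eq_sum_finMarginal a P (fun s => Real.log (Pa s)),
    sum_mul_comp_eq_sum_finMarginal b P (fun t => Real.log (Pb t)),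
    sum_mul_comp_eq_sum_finMarginal (ca ∘ a) P (fun m => Real.log (Pc m))] at hgibbs
  simp only [shannonEntropy]
  linarith

end FiniteDistribution

section CylinderEntropy

variable {d : ℕ} {𝒜 : Type*}

abbrev restrictConfig {Λ₁ Λ₂ : Finset (LatZ d)} (h : Λ₁ ⊆ Λ₂) (x : Λ₂ → 𝒜) : Λ₁ → 𝒜 :=
  fun v => x ⟨v, h v.2⟩

lemma cylinder_eq_preimage_restrict (Λ : Finset (LatZ d)) (x : Λ → 𝒜) :
    {ω : LatZ d → 𝒜 | ∀ v : Λ, ω v = x v} = (Λ.restrict : (LatZ d → 𝒜) → Λ → 𝒜) ⁻¹' {x} := by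
  ext ω
  simp [funext_iff]

variable [MeasurableSpace 𝒜] (μ : Measure (LatZ d → 𝒜))

lemma cylProb_nonneg (Λ : Finset (LatZ d)) (x : Λ → 𝒜) : 0 ≤ cylProb μ Λ x :=
  ENNReal.toReal_nonneg

lemma cylProb_le_one [IsProbabilityMeasure μ] (Λ : Finset (LatZ d)) (x : Λ → 𝒜) :
    cylProb μ Λ x ≤ 1 :=
  measureReal_le_one

variable [MeasurableSingletonClass 𝒜]

lemma measurableSet_cylinder (Λ : Finset (LatZ d)) (x : Λ → 𝒜) :
    MeasurableSet {ω : LatZ d → 𝒜 | ∀ v : Λ, ω v = x v} := by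
  rw [cylinder_eq_preimage_restrict]
  exact Finset.measurable_restrict Λ (measurableSet_singleton x)

lemma cylProb_eq_measureReal_map (Λ : Finset (LatZ d)) (x : Λ → 𝒜) :
    cylProb μ Λ x = (μ.map Λ.restrict).real {x} := by
  rw [map_measureReal_apply (Finset.measurable_restrict Λ) (measurableSet_singleton x), cylProb,
    ← measureReal_def, cylinder_eq_preimage_restrict]

lemma finMarginal_restrictConfig_cylProb [Fintype 𝒜] [DecidableEq 𝒜] [IsFiniteMeasure μ]
    {Λ₁ Λ₂ : Finset (LatZ d)} (h : Λ₁ ⊆ Λ₂) :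
    finMarginal (restrictConfig h) (cylProb μ Λ₂) = cylProb μ Λ₁ := by
  funext y
  simp only [finMarginal, cylProb_eq_measureReal_map]
  have hr : Measurable (restrictConfig (𝒜 := 𝒜) h) :=
    measurable_pi_lambda _ fun v => measurable_pi_apply _
  rw [sum_measureReal_singleton,
    show (Λ₁.restrict : (LatZ d → 𝒜) → Λ₁ → 𝒜) = restrictConfig h ∘ Λ₂.restrict from rfl,
    ← Measure.map_map hr (Finset.measurable_restrict Λ₂),
    map_measureReal_apply hr (measurableSet_singleton y)]
  congr 1
  ext x
  simp

lemma sum_cylProb [Fintype 𝒜] [IsProbabilityMeasure μ] (Λ : Finset (LatZ d)) :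
    ∑ x : Λ → 𝒜, cylProb μ Λ x = 1 := by
  have := Measure.isProbabilityMeasure_map (μ := μ) (Finset.measurable_restrict Λ).aemeasurable
  simp only [cylProb_eq_measureReal_map]
  rw [sum_measureReal_singleton, coe_univ, probReal_univ]

variable [Fintype 𝒜]

section FiniteMeasure

variable [IsFiniteMeasure μ]

lemma condEnt_eq_entS_sub (Λ Λ' : Finset (LatZ d)) :
    condEnt μ Λ Λ' = entS μ (Λ ∪ Λ') - entS μ Λ' := by
  classical
  have h := neg_sum_mul_log_div_finMarginal (P := cylProb μ (Λ ∪ Λ'))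
    (restrictConfig subset_union_right) (cylProb_nonneg μ (Λ ∪ Λ'))
  rwa [finMarginal_restrictConfig_cylProb] at h

lemma entS_mono {Λ₁ Λ₂ : Finset (LatZ d)} (h : Λ₁ ⊆ Λ₂) : entS μ Λ₁ ≤ entS μ Λ₂ := by
  classical
  have := shannonEntropy_finMarginal_le (P := cylProb μ Λ₂) (restrictConfig h)
    (cylProb_nonneg μ Λ₂)
  rwa [finMarginal_restrictConfig_cylProb] at this

lemma entS_union_add_entS_inter_le (X Y : Finset (LatZ d)) :
    entS μ (X ∪ Y) + entS μ (X ∩ Y) ≤ entS μ X + entS μ Y := by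
  classical
  have hssa := shannonEntropy_add_shannonEntropy_le (P := cylProb μ (X ∪ Y)) (cylProb_nonneg μ _)
    (restrictConfig subset_union_left) (restrictConfig subset_union_right)
    (restrictConfig inter_subset_left) (restrictConfig inter_subset_right) (fun _ => rfl)
    (fun x y hX hY => funext fun v => by
      rcases mem_union.1 v.2 with hv | hv
      · exact congrFun hX ⟨v, hv⟩
      · exact congrFun hY ⟨v, hv⟩)
  rw [finMarginal_restrictConfig_cylProb, finMarginal_restrictConfig_cylProb] at hssa
  show shannonEntropy _ + shannonEntropy (cylProb μ (X ∩ Y)) ≤ _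
  rwa [← finMarginal_restrictConfig_cylProb μ (inter_subset_left.trans subset_union_left)]

lemma condEnt_nonneg (Λ Λ' : Finset (LatZ d)) : 0 ≤ condEnt μ Λ Λ' := by
  rw [condEnt_eq_entS_sub, sub_nonneg]
  exact entS_mono μ subset_union_right

lemma condEnt_anti_right {Λ Λ'₁ Λ'₂ : Finset (LatZ d)} (h : Λ'₁ ⊆ Λ'₂) :
    condEnt μ Λ Λ'₂ ≤ condEnt μ Λ Λ'₁ := by
  have hssa := entS_union_add_entS_inter_le μ (Λ ∪ Λ'₁) Λ'₂
  have hinter := entS_mono μ (subset_inter subset_union_right h : Λ'₁ ⊆ (Λ ∪ Λ'₁) ∩ Λ'₂)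
  rw [union_assoc, union_eq_right.2 h] at hssa
  rw [condEnt_eq_entS_sub, condEnt_eq_entS_sub]
  linarith

end FiniteMeasure

variable [IsProbabilityMeasure μ]

lemma entS_le_card_mul_log (Λ : Finset (LatZ d)) :
    entS μ Λ ≤ #Λ * Real.log (Fintype.card 𝒜) := by
  have := shannonEntropy_le_log_card (cylProb_nonneg μ Λ) (sum_cylProb μ Λ)
  rwa [Fintype.card_fun, Fintype.card_coe, Nat.cast_pow, Real.log_pow] at this

lemma entS_empty : entS μ (∅ : Finset (LatZ d)) = 0 :=
  le_antisymm (by simpa using entS_le_card_mul_log μ ∅)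
    (shannonEntropy_nonneg (cylProb_nonneg μ ∅) (cylProb_le_one μ ∅))

lemma condEnt_le_entS (Λ Λ' : Finset (LatZ d)) : condEnt μ Λ Λ' ≤ entS μ Λ := by
  have := condEnt_anti_right μ (Λ := Λ) (empty_subset Λ')
  rwa [condEnt_eq_entS_sub μ Λ ∅, union_empty, entS_empty, sub_zero] at this

theorem entS_biUnion_eq_sum_condEnt {ι : Type*} [LinearOrder ι] (B : ι → Finset (LatZ d))
    (Q : Finset ι) :
    entS μ (Q.biUnion B) = ∑ q ∈ Q, condEnt μ (B q) ((Q.filter (· < q)).biUnion B) := by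
  classical
  induction Q using Finset.induction_on_max with
  | empty => simp [entS_empty μ]
  | insert a s hlt ih =>
    have hfa : (insert a s).filter (· < a) = s := by
      rw [filter_insert, if_neg (lt_irrefl a)]
      exact filter_true_of_mem hlt
    have hfq : ∀ q ∈ s, (insert a s).filter (· < q) = s.filter (· < q) := fun q hq => by
      rw [filter_insert, if_neg (asymm (hlt q hq))]
    rw [biUnion_insert, sum_insert fun h => lt_irrefl a (hlt a h), hfa,
      sum_congr rfl fun q hq => by rw [hfq q hq], ← ih, condEnt_eq_entS_sub]
    ring

end CylinderEntropy

section Translation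

variable {d : ℕ} {𝒜 : Type*}

def translateEquiv (Λ : Finset (LatZ d)) (w : LatZ d) : Λ ≃ Λ.image (· + w) :=
  Equiv.subtypeEquiv (Equiv.addRight w) fun v => by simp

lemma measurable_shiftMap [MeasurableSpace 𝒜] (w : LatZ d) : Measurable (shiftMap (𝒜 := 𝒜) w) :=
  measurable_pi_lambda _ fun u => measurable_pi_apply (u + w)

variable [MeasurableSpace 𝒜] [MeasurableSingletonClass 𝒜] (μ : Measure (LatZ d → 𝒜))

lemma cylProb_image_add_right (hinv : TransInv μ) (w : LatZ d) (Λ : Finset (LatZ d))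
    (x : Λ.image (· + w) → 𝒜) :
    cylProb μ (Λ.image (· + w)) x = cylProb μ Λ (x ∘ translateEquiv Λ w) := by
  rw [cylProb]
  conv_rhs => rw [cylProb, ← hinv w, Measure.map_apply (measurable_shiftMap w)
    (measurableSet_cylinder Λ _)]
  congr 2
  ext ω
  exact (translateEquiv Λ w).forall_congr_right.symm

variable [Fintype 𝒜]

lemma entS_image_add_right (hinv : TransInv μ) (w : LatZ d) (Λ : Finset (LatZ d)) :
    entS μ (Λ.image (· + w)) = entS μ Λ := by
  rw [entS, entS, Fintype.sum_equiv ((translateEquiv Λ w).symm.arrowCongr (Equiv.refl 𝒜))]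
  intro x
  rw [cylProb_image_add_right μ hinv]
  rfl

lemma condEnt_image_add_right [IsFiniteMeasure μ] (hinv : TransInv μ) (w : LatZ d)
    (Λ Λ' : Finset (LatZ d)) :
    condEnt μ (Λ.image (· + w)) Λ' = condEnt μ Λ (Λ'.image (· - w)) := by
  have hΛ' : (Λ'.image (· - w)).image (· + w) = Λ' := by
    simp [image_image, Function.comp_def]
  conv_lhs => rw [← hΛ']
  rw [condEnt_eq_entS_sub, condEnt_eq_entS_sub, ← image_union, entS_image_add_right μ hinv,
    entS_image_add_right μ hinv]

end Translation

section Boxes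

variable {d : ℕ}

lemma mem_Vbox {n : ℕ} {v : LatZ d} : v ∈ Vbox d n ↔ ∀ i, -(n : ℤ) ≤ v i ∧ v i ≤ n := by
  simp [Vbox, Fintype.mem_piFinset]

lemma Vbox_mono : Monotone (Vbox d) := fun m n h v hv => by
  rw [mem_Vbox] at hv ⊢
  have : (m : ℤ) ≤ n := by exact_mod_cast h
  exact fun i => ⟨by linarith [hv i], by linarith [hv i]⟩

lemma card_Vbox (n : ℕ) : #(Vbox d n) = (2 * n + 1) ^ d := by
  simp only [Vbox, Fintype.card_piFinset, Int.card_Icc, prod_const, card_univ, Fintype.card_fin]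
  congr 1
  omega

lemma exists_Vbox_superset (F : Finset (LatZ d)) : ∃ M, F ⊆ Vbox d M := by
  have hcover : (F : Set (LatZ d)) ⊆ ⋃ n, (Vbox d n : Set (LatZ d)) := fun v _ => by
    refine Set.mem_iUnion.2 ⟨univ.sup fun i => (v i).natAbs, mem_Vbox.2 fun i => abs_le.1 ?_⟩
    rw [Int.abs_eq_natAbs]
    exact_mod_cast le_sup (f := fun i => (v i).natAbs) (mem_univ i)
  exact Directed.exists_mem_subset_of_finset_subset_biUnion
    (Monotone.directed_le fun m n h => coe_subset.2 (Vbox_mono h)) hcover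

lemma tendsto_card_Vbox_sub_div_card_Vbox (ρ : ℕ) :
    Tendsto (fun n : ℕ => (#(Vbox d (n - ρ)) : ℝ) / #(Vbox d n)) atTop (𝓝 1) := by
  have hratio : Tendsto (fun n : ℕ => (1 - 2 * (ρ : ℝ) / (2 * n + 1)) ^ d) atTop (𝓝 1) := by
    have h0 : Tendsto (fun n : ℕ => 2 * (ρ : ℝ) / (2 * n + 1)) atTop (𝓝 0) :=
      tendsto_const_nhds.div_atTop (tendsto_atTop_add_const_right _ _
        ((tendsto_natCast_atTop_atTop (R := ℝ)).const_mul_atTop two_pos))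
    simpa using ((tendsto_const_nhds (x := (1 : ℝ))).sub h0).pow d
  refine hratio.congr' ?_
  filter_upwards [eventually_ge_atTop ρ] with n hn
  rw [card_Vbox, card_Vbox, Nat.cast_pow, Nat.cast_pow, ← div_pow]
  congr 1
  push_cast [Nat.cast_sub hn]
  field_simp
  ring

lemma mem_interBox {S : Set (LatZ d)} {n : ℕ} {v : LatZ d} :
    v ∈ interBox d S n ↔ v ∈ Vbox d n ∧ v ∈ S := by
  simp [interBox]

lemma interBox_mono (S : Set (LatZ d)) : Monotone (interBox d S) := fun _ _ h _ hv =>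
  mem_interBox.2 ⟨Vbox_mono h (mem_interBox.1 hv).1, (mem_interBox.1 hv).2⟩

end Boxes

section ConditionalEntropyLimit

variable {d : ℕ} {𝒜 : Type*} [Fintype 𝒜] [MeasurableSpace 𝒜] [MeasurableSingletonClass 𝒜]
  (μ : Measure (LatZ d → 𝒜)) [IsFiniteMeasure μ]

/-- `S(Λ | S)` for a possibly infinite `S`: `n ↦ S(Λ | S ∩ V_n)` is antitone, so its infimum is
its limit. -/
noncomputable def condEntLim (Λ : Finset (LatZ d)) (S : Set (LatZ d)) : ℝ :=
  ⨅ n, condEnt μ Λ (interBox d S n)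

lemma tendsto_condEnt_interBox (Λ : Finset (LatZ d)) (S : Set (LatZ d)) :
    Tendsto (fun n => condEnt μ Λ (interBox d S n)) atTop (𝓝 (condEntLim μ Λ S)) :=
  tendsto_atTop_ciInf (fun _ _ h => condEnt_anti_right μ (interBox_mono S h))
    ⟨0, Set.forall_mem_range.2 fun _ => condEnt_nonneg μ _ _⟩

lemma condEntLim_le_condEnt {Λ F : Finset (LatZ d)} {S : Set (LatZ d)} (hF : ↑F ⊆ S) :
    condEntLim μ Λ S ≤ condEnt μ Λ F := by
  obtain ⟨M, hM⟩ := exists_Vbox_superset F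
  exact (ciInf_le ⟨0, Set.forall_mem_range.2 fun _ => condEnt_nonneg μ _ _⟩ M).trans
    (condEnt_anti_right μ fun v hv => mem_interBox.2 ⟨hM hv, hF hv⟩)

lemma condEntLim_le_condEnt_image_add (hinv : TransInv μ) (Λ : Finset (LatZ d))
    (S : Set (LatZ d)) (w : LatZ d) (n : ℕ) :
    condEntLim μ Λ S ≤ condEnt μ (Λ.image (· + w)) (interBox d ((· - w) ⁻¹' S) n) := by
  rw [condEnt_image_add_right μ hinv]
  refine condEntLim_le_condEnt μ fun u hu => ?_
  obtain ⟨v, hv, rfl⟩ := mem_image.1 hu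
  exact (mem_interBox.1 hv).2

lemma condEnt_image_add_le_condEnt_interBox (hinv : TransInv μ) (Λ : Finset (LatZ d))
    (S : Set (LatZ d)) (w : LatZ d) {r n : ℕ} (hw : ∀ u ∈ Vbox d r, u + w ∈ Vbox d n) :
    condEnt μ (Λ.image (· + w)) (interBox d ((· - w) ⁻¹' S) n) ≤ condEnt μ Λ (interBox d S r) := by
  rw [condEnt_image_add_right μ hinv]
  refine condEnt_anti_right μ fun u hu => mem_image.2 ⟨u + w, ?_, add_sub_cancel_right u w⟩
  obtain ⟨hur, huS⟩ := mem_interBox.1 hu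
  exact mem_interBox.2 ⟨hw u hur, by simpa using huS⟩

end ConditionalEntropyLimit

section Lattice

variable {d : ℕ} (e : Fin d → LatZ d)

lemma latt_eq_linearCombination : latt e = Fintype.linearCombination ℤ e :=
  funext fun c => (Fintype.linearCombination_apply ℤ e c).symm

lemma latt_add (a b : Fin d → ℤ) : latt e (a + b) = latt e a + latt e b := by
  rw [latt_eq_linearCombination, map_add]

variable {e} in
lemma latt_injective (hind : LinearIndependent ℤ e) :
    Function.Injective (latt e) := by
  rw [latt_eq_linearCombination]
  exact hind.fintypeLinearCombination_injective

lemma lexLt_iff_toLex_lt (a b : Fin d → ℤ) : lexLt a b ↔ toLex a < toLex b :=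
  ⟨fun ⟨i, hlt, heq⟩ => ⟨i, heq, hlt⟩, fun ⟨i, heq, hlt⟩ => ⟨i, hlt, heq⟩⟩

end Lattice

section Tiling

variable {d N : ℕ} {A : Finset (LatZ d)} {e : Fin d → LatZ d} {parts : Fin N → Finset (LatZ d)}

lemma IsTiling.existsUnique_sub_latt_mem_parts (htile : IsTiling A e)
    (hdisj : ∀ k l, k ≠ l → Disjoint (parts k) (parts l)) (hunion : univ.biUnion parts = A)
    (v : LatZ d) : ∃! p : Fin N × (Fin d → ℤ), v - latt e p.2 ∈ parts p.1 := by
  obtain ⟨a, ha, c, rfl⟩ := htile.cover v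
  obtain ⟨k, -, hk⟩ := mem_biUnion.1 (hunion ▸ ha)
  refine ⟨(k, c), by simpa using hk, ?_⟩
  rintro ⟨k', c'⟩ hp
  have hc : c' = c := by
    by_contra hne
    have hA : a + latt e c - latt e c' ∈ A := hunion ▸ mem_biUnion.2 ⟨k', mem_univ _, hp⟩
    exact disjoint_left.1 (htile.disj c' c fun h => hne (latt_injective htile.indep h))
      (mem_image.2 ⟨_, hA, sub_add_cancel _ _⟩) (mem_image.2 ⟨a, ha, rfl⟩)
  subst hc
  simp only [add_sub_cancel_right] at hp
  by_cases hkk : k' = k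
  · rw [hkk]
  · exact absurd hk (disjoint_left.1 (hdisj k' k hkk) hp)

end Tiling

section TilePieces

variable {d N : ℕ} (e : Fin d → LatZ d) (parts : Fin N → Finset (LatZ d))

/-- The conditioning set `Λ_k` of the piece `A_k`. -/
def tilePast (k : Fin N) : Set (LatZ d) :=
  ((↑(parts k) : Set (LatZ d)) + Gneg e) ∪
    ((↑((Finset.Iio k).biUnion parts) : Set (LatZ d)) + Gfull e)

noncomputable def tileBlock (n : ℕ) (k : Fin N) (c : Fin d → ℤ) : Finset (LatZ d) :=
  (parts k).image (· + latt e c) ∩ Vbox d n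

noncomputable def goodTiles (Q : Finset (Fin d → ℤ)) (F : Finset (LatZ d)) (n : ℕ) :
    Finset (Fin d → ℤ) :=
  Q.filter fun c => ∀ u ∈ F, u + latt e c ∈ Vbox d n

variable {e} in
/-- The coordinates `c` for which some piece `A_k + latt e c` meets `V_n`. -/
noncomputable def tileCoords (hinj : Function.Injective (latt e)) (n : ℕ) : Finset (Fin d → ℤ) :=
  ((Vbox d n).biUnion fun v => univ.biUnion fun k => (parts k).image (v - ·)).preimage (latt e)
    hinj.injOn

def tileKey (p : Fin N × (Fin d → ℤ)) : Fin N ×ₗ Lex (Fin d → ℤ) :=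
  toLex (p.1, toLex p.2)

lemma tileKey_injective : Function.Injective (tileKey (d := d) (N := N)) :=
  fun p q h => by simpa [tileKey, Prod.ext_iff] using h

variable {e parts}

lemma mem_tileBlock {n : ℕ} {k : Fin N} {c : Fin d → ℤ} {v : LatZ d} :
    v ∈ tileBlock e parts n k c ↔ v - latt e c ∈ parts k ∧ v ∈ Vbox d n := by
  simp [tileBlock, sub_eq_add_neg, and_comm]

lemma mem_tileCoords_of_nonempty (hinj : Function.Injective (latt e)) {n : ℕ} {k : Fin N}
    {c : Fin d → ℤ} (h : (tileBlock e parts n k c).Nonempty) : c ∈ tileCoords parts hinj n := by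
  obtain ⟨v, hv⟩ := h
  obtain ⟨hp, hvn⟩ := mem_tileBlock.1 hv
  rw [tileCoords, mem_preimage, mem_biUnion]
  exact ⟨v, hvn, mem_biUnion.2 ⟨k, mem_univ k, mem_image.2 ⟨_, hp, sub_sub_cancel v _⟩⟩⟩

lemma sub_latt_mem_tilePast_iff {k : Fin N} {c : Fin d → ℤ} {v : LatZ d} :
    v - latt e c ∈ tilePast e parts k ↔
      ∃ p, v - latt e p.2 ∈ parts p.1 ∧ tileKey p < tileKey (k, c) := by
  have hshift : ∀ c' : Fin d → ℤ, v - latt e c = (v - latt e c') + latt e (c' - c) := fun c' => by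
    rw [← sub_add_cancel c' c, latt_add, add_sub_cancel_right]
    abel
  simp only [tileKey, Prod.Lex.toLex_lt_toLex]
  constructor
  · rintro (⟨p, hp, -, ⟨δ, hδ, rfl⟩, hpg⟩ | ⟨p, hp, -, ⟨δ, rfl⟩, hpg⟩)
    · refine ⟨(k, δ + c), ?_, Or.inr ⟨rfl, ?_⟩⟩
      · rwa [latt_add, ← sub_sub, sub_right_comm, ← hpg, add_sub_cancel_right]
      · rw [toLex_add]
        exact add_lt_of_neg_left _ ((lexLt_iff_toLex_lt δ 0).1 hδ)
    · obtain ⟨j, hj, hpj⟩ := mem_biUnion.1 hp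
      refine ⟨(j, δ + c), ?_, Or.inl (mem_Iio.1 hj)⟩
      rwa [latt_add, ← sub_sub, sub_right_comm, ← hpg, add_sub_cancel_right]
  · rintro ⟨⟨j, c'⟩, hv, hjk | ⟨rfl, hc⟩⟩
    · exact Or.inr ⟨v - latt e c', mem_biUnion.2 ⟨j, mem_Iio.2 hjk, hv⟩, _, ⟨c' - c, rfl⟩,
        (hshift c').symm⟩
    · refine Or.inl ⟨v - latt e c', hv, _, ⟨c' - c, ?_, rfl⟩, (hshift c').symm⟩
      rw [lexLt_iff_toLex_lt, toLex_sub, toLex_zero]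
      exact sub_neg.2 hc

end TilePieces

section TileDecomposition

variable {d N : ℕ} {e : Fin d → LatZ d} {parts : Fin N → Finset (LatZ d)} {n : ℕ}
  {Q : Finset (Fin d → ℤ)}

lemma biUnion_tileBlock_eq_Vbox
    (hcover : ∀ v, ∃ p : Fin N × (Fin d → ℤ), v - latt e p.2 ∈ parts p.1)
    (hQ : ∀ k c, (tileBlock e parts n k c).Nonempty → c ∈ Q) :
    (univ ×ˢ Q).biUnion (fun p => tileBlock e parts n p.1 p.2) = Vbox d n := by
  ext v
  simp only [mem_biUnion, mem_product, mem_univ, true_and, mem_tileBlock]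
  constructor
  · rintro ⟨p, -, -, hv⟩
    exact hv
  · intro hv
    obtain ⟨p, hp⟩ := hcover v
    exact ⟨p, hQ p.1 p.2 ⟨v, mem_tileBlock.2 ⟨hp, hv⟩⟩, hp, hv⟩

lemma biUnion_tileBlock_lt_eq_interBox (hQ : ∀ k c, (tileBlock e parts n k c).Nonempty → c ∈ Q)
    (k : Fin N) (c : Fin d → ℤ) :
    ((univ ×ˢ Q).filter (fun p => tileKey p < tileKey (k, c))).biUnion
        (fun p => tileBlock e parts n p.1 p.2) =
      interBox d ((· - latt e c) ⁻¹' tilePast e parts k) n := by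
  ext v
  simp only [mem_biUnion, mem_filter, mem_product, mem_univ, true_and, mem_tileBlock,
    mem_interBox, Set.mem_preimage, sub_latt_mem_tilePast_iff]
  constructor
  · rintro ⟨p, ⟨-, hlt⟩, hp, hv⟩
    exact ⟨hv, p, hp, hlt⟩
  · rintro ⟨hv, p, hp, hlt⟩
    exact ⟨p, ⟨hQ _ _ ⟨v, mem_tileBlock.2 ⟨hp, hv⟩⟩, hlt⟩, hp, hv⟩

variable {𝒜 : Type*} [Fintype 𝒜] [MeasurableSpace 𝒜] [MeasurableSingletonClass 𝒜]
  (μ : Measure (LatZ d → 𝒜)) [IsProbabilityMeasure μ]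

/-- The chain rule along the pieces `A_k + latt e c` meeting `V_n`, ordered lexicographically
by `(k, c)`. -/
theorem entS_Vbox_eq_sum_condEnt_tileBlock
    (hcover : ∀ v, ∃ p : Fin N × (Fin d → ℤ), v - latt e p.2 ∈ parts p.1)
    (hQ : ∀ k c, (tileBlock e parts n k c).Nonempty → c ∈ Q) :
    entS μ (Vbox d n) = ∑ c ∈ Q, ∑ k, condEnt μ (tileBlock e parts n k c)
      (interBox d ((· - latt e c) ⁻¹' tilePast e parts k) n) := by
  let B : Fin N ×ₗ Lex (Fin d → ℤ) → Finset (LatZ d) :=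
    fun κ => tileBlock e parts n (ofLex κ).1 (ofLex (ofLex κ).2)
  have hB : (fun p => B (tileKey p)) = fun p => tileBlock e parts n p.1 p.2 := rfl
  rw [← biUnion_tileBlock_eq_Vbox hcover hQ, ← hB, ← image_biUnion, entS_biUnion_eq_sum_condEnt,
    sum_image tileKey_injective.injOn, sum_product_right]
  refine sum_congr rfl fun c _ => sum_congr rfl fun k _ => ?_
  rw [filter_image, image_biUnion, hB, biUnion_tileBlock_lt_eq_interBox hQ k c]
  rfl

end TileDecomposition

section TileBounds

variable {d N : ℕ} {e : Fin d → LatZ d} {parts : Fin N → Finset (LatZ d)} {n : ℕ}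
  {Q : Finset (Fin d → ℤ)}

lemma tileBlock_eq_image_of_mem_goodTiles {F : Finset (LatZ d)} (hF : ∀ k, parts k ⊆ F)
    {c : Fin d → ℤ} (hc : c ∈ goodTiles e Q F n) (k : Fin N) :
    tileBlock e parts n k c = (parts k).image (· + latt e c) :=
  inter_eq_left.2 (image_subset_iff.2 fun p hp => (mem_filter.1 hc).2 p (hF k hp))

lemma sum_card_tileBlock_goodTiles {F : Finset (LatZ d)} (hF : ∀ k, parts k ⊆ F) :
    ∑ c ∈ goodTiles e Q F n, ∑ k, #(tileBlock e parts n k c) =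
      #(goodTiles e Q F n) * ∑ k, #(parts k) := by
  rw [← smul_eq_mul, ← sum_const]
  refine sum_congr rfl fun c hc => sum_congr rfl fun k _ => ?_
  rw [tileBlock_eq_image_of_mem_goodTiles hF hc, card_image_of_injective _ (add_left_injective _)]

lemma card_Vbox_eq_sum_card_tileBlock
    (hpart : ∀ v, ∃! p : Fin N × (Fin d → ℤ), v - latt e p.2 ∈ parts p.1)
    (hQ : ∀ k c, (tileBlock e parts n k c).Nonempty → c ∈ Q) :
    #(Vbox d n) = ∑ c ∈ Q, ∑ k, #(tileBlock e parts n k c) := by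
  rw [← biUnion_tileBlock_eq_Vbox (fun v => (hpart v).exists) hQ, card_biUnion, sum_product_right]
  intro p _ q _ hpq
  refine disjoint_left.2 fun v hp hq => hpq ?_
  exact (hpart v).unique (mem_tileBlock.1 hp).1 (mem_tileBlock.1 hq).1

lemma card_goodTiles_mul_le
    (hpart : ∀ v, ∃! p : Fin N × (Fin d → ℤ), v - latt e p.2 ∈ parts p.1)
    (hQ : ∀ k c, (tileBlock e parts n k c).Nonempty → c ∈ Q)
    {F : Finset (LatZ d)} (hF : ∀ k, parts k ⊆ F) :
    #(goodTiles e Q F n) * ∑ k, #(parts k) ≤ #(Vbox d n) := by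
  rw [← sum_card_tileBlock_goodTiles hF, card_Vbox_eq_sum_card_tileBlock hpart hQ]
  exact sum_le_sum_of_subset (filter_subset _ _)

/-- Away from the boundary of `V_n` every site lies in a good tile. -/
lemma exists_card_Vbox_sub_le
    (hcover : ∀ v, ∃ p : Fin N × (Fin d → ℤ), v - latt e p.2 ∈ parts p.1)
    {Q : ℕ → Finset (Fin d → ℤ)} (hQ : ∀ n k c, (tileBlock e parts n k c).Nonempty → c ∈ Q n)
    {F : Finset (LatZ d)} (hF : ∀ k, parts k ⊆ F) :
    ∃ ρ, ∀ n, ρ ≤ n → #(Vbox d (n - ρ)) ≤ #(goodTiles e (Q n) F n) * ∑ k, #(parts k) := by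
  obtain ⟨M, hM⟩ := exists_Vbox_superset F
  refine ⟨2 * M, fun n hn => ?_⟩
  calc #(Vbox d (n - 2 * M))
      ≤ #((goodTiles e (Q n) F n).biUnion fun c =>
          univ.biUnion fun k => tileBlock e parts n k c) := by
        refine card_le_card fun v hv => ?_
        obtain ⟨⟨k, c⟩, hp⟩ := hcover v
        have hvn : v ∈ Vbox d n := Vbox_mono (Nat.sub_le n _) hv
        have hgood : c ∈ goodTiles e (Q n) F n := by
          refine mem_filter.2 ⟨hQ n k c ⟨v, mem_tileBlock.2 ⟨hp, hvn⟩⟩, fun u hu => ?_⟩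
          have hu := mem_Vbox.1 (hM hu)
          have hp' := mem_Vbox.1 (hM (hF k hp))
          have hv' := mem_Vbox.1 hv
          refine mem_Vbox.2 fun i => ?_
          have : latt e c i = v i - (v - latt e c) i := by simp
          rw [Pi.add_apply, this]
          push_cast [Nat.cast_sub hn] at hv'
          constructor <;> linarith [hu i, hp' i, hv' i]
        exact mem_biUnion.2 ⟨c, hgood, mem_biUnion.2 ⟨k, mem_univ k, mem_tileBlock.2 ⟨hp, hvn⟩⟩⟩
    _ ≤ ∑ c ∈ goodTiles e (Q n) F n, ∑ k, #(tileBlock e parts n k c) :=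
        card_biUnion_le.trans (sum_le_sum fun _ _ => card_biUnion_le)
    _ = #(goodTiles e (Q n) F n) * ∑ k, #(parts k) := sum_card_tileBlock_goodTiles hF

lemma tendsto_card_goodTiles_mul_div_card_Vbox
    (hpart : ∀ v, ∃! p : Fin N × (Fin d → ℤ), v - latt e p.2 ∈ parts p.1)
    {Q : ℕ → Finset (Fin d → ℤ)} (hQ : ∀ n k c, (tileBlock e parts n k c).Nonempty → c ∈ Q n)
    {F : Finset (LatZ d)} (hF : ∀ k, parts k ⊆ F) :
    Tendsto (fun n => ((#(goodTiles e (Q n) F n) * ∑ k, #(parts k) : ℕ) : ℝ) / #(Vbox d n))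
      atTop (𝓝 1) := by
  obtain ⟨ρ, hρ⟩ := exists_card_Vbox_sub_le (fun v => (hpart v).exists) hQ hF
  refine tendsto_of_tendsto_of_tendsto_of_le_of_le'
    (tendsto_card_Vbox_sub_div_card_Vbox (d := d) ρ) tendsto_const_nhds ?_
    (Eventually.of_forall fun n => ?_)
  · filter_upwards [eventually_ge_atTop ρ] with n hn
    exact div_le_div_of_nonneg_right (by exact_mod_cast hρ n hn) (Nat.cast_nonneg _)
  · exact div_le_one_of_le₀ (by exact_mod_cast card_goodTiles_mul_le hpart (hQ n) hF)
      (Nat.cast_nonneg _)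

end TileBounds

section EntropyBounds

variable {d : ℕ} {𝒜 : Type*} [Fintype 𝒜] [MeasurableSpace 𝒜] [MeasurableSingletonClass 𝒜]
  (μ : Measure (LatZ d → 𝒜)) [IsProbabilityMeasure μ] {N n : ℕ} {e : Fin d → LatZ d}
  {parts : Fin N → Finset (LatZ d)} {Q : Finset (Fin d → ℤ)} {F : Finset (LatZ d)}

theorem card_goodTiles_mul_sum_condEntLim_le_entS (hinv : TransInv μ)
    (hcover : ∀ v, ∃ p : Fin N × (Fin d → ℤ), v - latt e p.2 ∈ parts p.1)
    (hQ : ∀ k c, (tileBlock e parts n k c).Nonempty → c ∈ Q) (hF : ∀ k, parts k ⊆ F) :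
    #(goodTiles e Q F n) * ∑ k, condEntLim μ (parts k) (tilePast e parts k) ≤
      entS μ (Vbox d n) := by
  rw [entS_Vbox_eq_sum_condEnt_tileBlock μ hcover hQ, ← nsmul_eq_mul, ← sum_const]
  refine (sum_le_sum fun c hc => sum_le_sum fun k _ => ?_).trans
    (sum_le_sum_of_subset_of_nonneg (filter_subset _ _) fun _ _ _ =>
      sum_nonneg fun _ _ => condEnt_nonneg μ _ _)
  rw [tileBlock_eq_image_of_mem_goodTiles hF hc]
  exact condEntLim_le_condEnt_image_add μ hinv _ _ _ n

theorem entS_le_card_goodTiles_mul_sum_condEnt_add (hinv : TransInv μ)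
    (hpart : ∀ v, ∃! p : Fin N × (Fin d → ℤ), v - latt e p.2 ∈ parts p.1)
    (hQ : ∀ k c, (tileBlock e parts n k c).Nonempty → c ∈ Q) (hF : ∀ k, parts k ⊆ F)
    {r : ℕ} (hr : Vbox d r ⊆ F) :
    entS μ (Vbox d n) ≤
      #(goodTiles e Q F n) * ∑ k, condEnt μ (parts k) (interBox d (tilePast e parts k) r) +
        (#(Vbox d n) - #(goodTiles e Q F n) * ((∑ k, #(parts k) : ℕ) : ℝ)) *
          Real.log (Fintype.card 𝒜) := by
  set G := goodTiles e Q F n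
  have hGQ : G ⊆ Q := filter_subset _ _
  have hcard : (#(Vbox d n) : ℝ) - #G * ((∑ k, #(parts k) : ℕ) : ℝ) =
      ∑ c ∈ Q \ G, ∑ k, (#(tileBlock e parts n k c) : ℝ) := by
    have := congrArg (Nat.cast (R := ℝ))
      (sum_card_tileBlock_goodTiles (e := e) (Q := Q) (n := n) hF)
    rw [card_Vbox_eq_sum_card_tileBlock hpart hQ, ← sum_sdiff hGQ]
    push_cast at this ⊢
    rw [← this]
    ring
  rw [entS_Vbox_eq_sum_condEnt_tileBlock μ (fun v => (hpart v).exists) hQ, ← sum_sdiff hGQ,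
    add_comm, hcard, sum_mul, ← nsmul_eq_mul, ← sum_const]
  refine add_le_add (sum_le_sum fun c hc => sum_le_sum fun k _ => ?_) (sum_le_sum fun c _ => ?_)
  · rw [tileBlock_eq_image_of_mem_goodTiles hF hc]
    exact condEnt_image_add_le_condEnt_interBox μ hinv _ _ _
      fun u hu => (mem_filter.1 hc).2 u (hr hu)
  · rw [sum_mul]
    exact sum_le_sum fun k _ => (condEnt_le_entS μ _ _).trans (entS_le_card_mul_log μ _)

end EntropyBounds

lemma tendsto_div_of_bounds {S V b : ℕ → ℝ} {g : ℕ → ℕ → ℝ} {a σ L : ℝ} (hV : ∀ n, 0 < V n)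
    (ha : a ≠ 0) (hb : Tendsto b atTop (𝓝 σ))
    (hg : ∀ r, Tendsto (fun n => g r n * a / V n) atTop (𝓝 1))
    (hlow : ∀ r n, g r n * σ ≤ S n) (hup : ∀ r n, S n ≤ g r n * b r + (V n - g r n * a) * L) :
    Tendsto (fun n => S n / V n) atTop (𝓝 (1 / a * σ)) := by
  rw [tendsto_order]
  constructor
  · intro x hx
    have hlim : Tendsto (fun n => g 0 n * a / V n * (1 / a * σ)) atTop (𝓝 (1 / a * σ)) := by
      simpa using (hg 0).mul_const (1 / a * σ)
    filter_upwards [hlim.eventually (lt_mem_nhds hx)] with n hn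
    have hVn := (hV n).ne'
    refine hn.trans_le ?_
    rw [le_div_iff₀ (hV n)]
    calc g 0 n * a / V n * (1 / a * σ) * V n = g 0 n * σ := by field_simp
      _ ≤ S n := hlow 0 n
  · intro x hx
    have hbr : Tendsto (fun r => 1 / a * b r) atTop (𝓝 (1 / a * σ)) := hb.const_mul _
    obtain ⟨r, hr⟩ := (hbr.eventually (gt_mem_nhds hx)).exists
    have hlim : Tendsto (fun n => g r n * a / V n * (1 / a * b r) + (1 - g r n * a / V n) * L)
        atTop (𝓝 (1 / a * b r)) := by
      simpa using ((hg r).mul_const (1 / a * b r)).add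
        (((tendsto_const_nhds (x := (1 : ℝ))).sub (hg r)).mul_const L)
    filter_upwards [hlim.eventually (gt_mem_nhds hr)] with n hn
    have hVn := (hV n).ne'
    refine lt_of_le_of_lt ?_ hn
    rw [div_le_iff₀ (hV n)]
    calc S n ≤ g r n * b r + (V n - g r n * a) * L := hup r n
      _ = (g r n * a / V n * (1 / a * b r) + (1 - g r n * a / V n) * L) * V n := by
        field_simp

theorem entropy_density_tiling_decomposition_general {d : ℕ} {𝒜 : Type*} [Fintype 𝒜]
    [MeasurableSpace 𝒜] [MeasurableSingletonClass 𝒜]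
    (μ : Measure (LatZ d → 𝒜)) [IsProbabilityMeasure μ] (hinv : TransInv μ)
    (A : Finset (LatZ d)) (e : Fin d → LatZ d) (htile : IsTiling A e)
    (N : ℕ)
    (parts : Fin N → Finset (LatZ d))
    (hdisj : ∀ k l, k ≠ l → Disjoint (parts k) (parts l))
    (hunion : Finset.univ.biUnion parts = A) :
    ∃ (s : ℝ) (c : Fin N → ℝ),
      Filter.Tendsto (fun n => entS μ (Vbox d n) / ((Vbox d n).card : ℝ))
        Filter.atTop (nhds s) ∧
      (∀ k : Fin N,
        Filter.Tendsto
          (fun n => condEnt μ (parts k)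
            (interBox d
              (((↑(parts k) : Set (LatZ d)) + Gneg e) ∪
                ((↑((Finset.Iio k).biUnion parts) : Set (LatZ d)) + Gfull e)) n))
          Filter.atTop (nhds (c k))) ∧
      s = (1 / (A.card : ℝ)) * ∑ k : Fin N, c k := by
  have hpart := htile.existsUnique_sub_latt_mem_parts hdisj hunion
  have hQ : ∀ n k c, (tileBlock e parts n k c).Nonempty →
      c ∈ tileCoords parts (latt_injective htile.indep) n :=
    fun _ _ _ => mem_tileCoords_of_nonempty _
  have hsub : ∀ r k, parts k ⊆ A ∪ Vbox d r := fun r k =>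
    (hunion ▸ subset_biUnion_of_mem parts (mem_univ k)).trans subset_union_left
  have hcardA : ∑ k, #(parts k) = #A := by
    rw [← hunion, card_biUnion fun k _ l _ h => hdisj k l h]
  refine ⟨_, fun k => condEntLim μ (parts k) (tilePast e parts k),
    tendsto_div_of_bounds (L := Real.log (Fintype.card 𝒜))
      (g := fun r n => #(goodTiles e (tileCoords parts _ n) (A ∪ Vbox d r) n))
      (fun n => by rw [card_Vbox]; positivity)
      (by exact_mod_cast (card_pos.2 ⟨0, htile.zero_mem⟩).ne')
      (tendsto_finsetSum _ fun k _ => tendsto_condEnt_interBox μ _ _) (fun r => ?_)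
      (fun r n => card_goodTiles_mul_sum_condEntLim_le_entS μ hinv (fun v => (hpart v).exists)
        (hQ n) (hsub r))
      (fun r n => ?_),
    fun k => tendsto_condEnt_interBox μ _ _, rfl⟩
  · simpa [hcardA] using tendsto_card_goodTiles_mul_div_card_Vbox hpart hQ (hsub r)
  · simpa [hcardA] using
      entS_le_card_goodTiles_mul_sum_condEnt_add μ hinv hpart (hQ n) (hsub r) subset_union_right

/-- Main Theorem. Let `μ` be a translation invariant probability measure on
`𝒜^(ℤ^d)`, `(A, G)` a tiling of `ℤ^d` (with `G` generated by the linearly independent family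
`e`), and `A = A_1 ∪ … ∪ A_N` a partition into nonempty sets. Then the entropy density
`s_μ = lim_n S(V_n)/|V_n|` exists and
`s_μ = (1/|A|) Σ_{k} S(A_k | (A_k + G^-) ∪ (A_{<k} + G))`, where each conditional entropy
with infinite conditioning set `Λ'` is the limit `lim_n S(A_k | Λ' ∩ V_n)`. -/
theorem entropy_density_tiling_decomposition {d : ℕ} {𝒜 : Type*} [Fintype 𝒜] [Nonempty 𝒜]
    [MeasurableSpace 𝒜] [MeasurableSingletonClass 𝒜]
    (μ : Measure (LatZ d → 𝒜)) [IsProbabilityMeasure μ] (hinv : TransInv μ)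
    (A : Finset (LatZ d)) (e : Fin d → LatZ d) (htile : IsTiling A e)
    (N : ℕ) (hN1 : 1 ≤ N) (hNA : N ≤ A.card)
    (parts : Fin N → Finset (LatZ d))
    (hne : ∀ k, (parts k).Nonempty)
    (hdisj : ∀ k l, k ≠ l → Disjoint (parts k) (parts l))
    (hunion : Finset.univ.biUnion parts = A) :
    ∃ (s : ℝ) (c : Fin N → ℝ),
      Filter.Tendsto (fun n => entS μ (Vbox d n) / ((Vbox d n).card : ℝ))
        Filter.atTop (nhds s) ∧
      (∀ k : Fin N,
        Filter.Tendsto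
          (fun n => condEnt μ (parts k)
            (interBox d
              (((↑(parts k) : Set (LatZ d)) + Gneg e) ∪
                ((↑((Finset.Iio k).biUnion parts) : Set (LatZ d)) + Gfull e)) n))
          Filter.atTop (nhds (c k))) ∧
      s = (1 / (A.card : ℝ)) * ∑ k : Fin N, c k :=
  entropy_density_tiling_decomposition_general μ hinv A e htile N parts hdisj hunion
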